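/- Let f be a regular function on B(0,R) and set T_f(q) = f^c(q)⁻¹ q f^c(q), T_{f^c}(q) = f(q)⁻¹ q f(q), defined on B(0,R) ∖ Z_{f^s}. Then T_{f^c} ∘ T_f = id and T_f ∘ T_{f^c} = id on B(0,R) ∖ Z_{f^s}; in particular T_f is a bijection of B(0,R) ∖ Z_{f^s} onto itself. -/

import Mathlib

open Quaternion Finset

/-!
Write `g = ∑ qⁿ uₙ`, `h = ∑ qⁿ vₙ` and `s = g * h` for their regular product. Rearranging the
absolutely convergent double series gives `s(q) = ∑ qᵐ g(q) vₘ`, and since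
`qᵐ g(q) = g(q) (g(q)⁻¹ q g(q))ᵐ` this is `g(q) h(T q) = s(q)` with `T q = g(q)⁻¹ q g(q)`.
When the coefficients of `s` are central (real), `s(q)` commutes with `q` and
`s(T q) = g(q)⁻¹ s(q) g(q)`; hence `T q` avoids the zeros of `s`, and conjugating by
`h(T q) = g(q)⁻¹ s(q)` gives back `s(q)⁻¹ q s(q) = q`. Since `f^s = f^c * f = f * f^c`, both
`(g, h) = (f^c, f)` and `(f, f^c)` qualify, so `T_f` and `T_{f^c}` are mutually inverse.
-/

/-- The coefficients of the regular product of `∑ qⁿ uₙ` and `∑ qⁿ vₙ`. -/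
def regularMul {R : Type*} [Semiring R] (u v : ℕ → R) (n : ℕ) : R :=
  ∑ k ∈ range (n + 1), u k * v (n - k)

/-- The paper's `T_f` is `conjTransform f^c`, and `T_{f^c}` is `conjTransform f`. -/
def conjTransform {D : Type*} [DivisionRing D] (g : D → D) (q : D) : D :=
  (g q)⁻¹ * q * g q

section Coefficients

variable {R : Type*} [Semiring R]

theorem regularMul_eq_sum_antidiagonal (u v : ℕ → R) (n : ℕ) :
    regularMul u v n = ∑ p ∈ antidiagonal n, u p.1 * v p.2 :=
  (Nat.sum_antidiagonal_eq_sum_range_succ_mk (fun p => u p.1 * v p.2) n).symm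

theorem star_regularMul [StarRing R] (u v : ℕ → R) (n : ℕ) :
    star (regularMul u v n) = regularMul (star v) (star u) n := by
  rw [regularMul_eq_sum_antidiagonal, regularMul_eq_sum_antidiagonal, star_sum,
    ← Nat.sum_antidiagonal_swap]
  simp only [star_mul, Prod.fst_swap, Prod.snd_swap, Pi.star_apply]

theorem star_regularMul_self_star [StarRing R] (u : ℕ → R) (n : ℕ) :
    star (regularMul u (star u) n) = regularMul u (star u) n := by
  rw [star_regularMul, star_star]

end Coefficients

section Quaternion

variable {K : Type*} [CommRing K]

theorem Quaternion.re_sum {ι : Type*} (s : Finset ι) (x : ι → ℍ[K]) :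
    (∑ i ∈ s, x i).re = ∑ i ∈ s, (x i).re :=
  map_sum (QuaternionAlgebra.reₗ (-1 : K) 0 (-1)) x s

theorem Quaternion.re_mul_star_eq_re_star_mul (x y : ℍ[K]) :
    (x * star y).re = (star x * y).re := by
  simp only [re_mul, re_star, imI_star, imJ_star, imK_star]
  ring

variable [NoZeroDivisors K] [CharZero K]

theorem Quaternion.commute_of_star_eq_self {y : ℍ[K]} (hy : star y = y) (x : ℍ[K]) :
    Commute x y := by
  rw [star_eq_self.mp hy]
  exact (coe_commute _ x).symm

/-- `f * f^c = f^c * f`: both sides are real, with the same real part. -/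
theorem regularMul_self_star_comm (a : ℕ → ℍ[K]) (n : ℕ) :
    regularMul a (star a) n = regularMul (star a) a n := by
  have hre : (regularMul a (star a) n).re = (regularMul (star a) a n).re := by
    rw [regularMul, regularMul, re_sum, re_sum]
    exact sum_congr rfl fun k _ => re_mul_star_eq_re_star_mul _ _
  have hreal : star (regularMul (star a) a n) = regularMul (star a) a n := by
    simpa only [star_star] using star_regularMul_self_star (star a) n
  rw [star_eq_self.mp (star_regularMul_self_star a n), star_eq_self.mp hreal, hre]

end Quaternion

theorem HasSum.sum_antidiagonal {α A : Type*} [AddCommMonoid α] [TopologicalSpace α]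
    [ContinuousAdd α] [RegularSpace α] [AddCommMonoid A] [HasAntidiagonal A]
    {F : A × A → α} {S : α} (h : HasSum F S) :
    HasSum (fun n => ∑ p ∈ antidiagonal n, F p) S :=
  (HasAntidiagonal.sigmaAntidiagonalEquivProd.hasSum_iff.mpr h).sigma fun n =>
    (antidiagonal n).hasSum F

section NormedDivisionRing

variable {D : Type*} [NormedDivisionRing D]

theorem HasSum.pow_mul_mul_of_regularMul [CompleteSpace D] {q g s : D} {u v : ℕ → D}
    (hg : HasSum (fun n => q ^ n * u n) g) (hu : Summable fun n => ‖q ^ n * u n‖)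
    (hv : Summable fun n => ‖q ^ n * v n‖)
    (hs : HasSum (fun n => q ^ n * regularMul u v n) s) :
    HasSum (fun m => q ^ m * g * v m) s := by
  set F : ℕ × ℕ → D := fun p => q ^ p.2 * (q ^ p.1 * u p.1) * v p.2
  have hF : Summable F := by
    refine Summable.of_norm ((hu.mul_of_nonneg hv (fun _ => norm_nonneg _)
      fun _ => norm_nonneg _).congr fun p => ?_)
    simp only [F, norm_mul, norm_pow]
    ring
  obtain ⟨S, hS⟩ := hF
  have hdiag : HasSum (fun n => q ^ n * regularMul u v n) S := by
    refine hS.sum_antidiagonal.congr_fun fun n => ?_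
    rw [regularMul_eq_sum_antidiagonal, mul_sum]
    refine sum_congr rfl fun p hp => ?_
    rw [← mem_antidiagonal.mp hp, add_comm, pow_add]
    simp only [F, mul_assoc]
  rw [hdiag.unique hs] at hS
  exact ((Equiv.prodComm ℕ ℕ).hasSum_iff.mpr hS).prod_fiberwise fun m =>
    (hg.mul_left (q ^ m)).mul_right (v m)

theorem norm_conj₀ {c : D} (hc : c ≠ 0) (q : D) : ‖c⁻¹ * q * c‖ = ‖q‖ := by
  rw [norm_mul, norm_mul, norm_inv, mul_right_comm, inv_mul_cancel₀ (norm_ne_zero_iff.mpr hc),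
    one_mul]

theorem HasSum.conj₀ {q c s : D} {b : ℕ → D} (hs : HasSum (fun n => q ^ n * b n) s)
    (hc : c ≠ 0) (hb : ∀ n, Commute c (b n)) :
    HasSum (fun n => (c⁻¹ * q * c) ^ n * b n) (c⁻¹ * s * c) := by
  refine ((hs.mul_left c⁻¹).mul_right c).congr_fun fun n => ?_
  rw [GroupWithZero.conj_pow₀ hc, mul_assoc _ c, (hb n).eq]
  simp only [mul_assoc]

theorem HasSum.commute_of_commute {q s : D} {b : ℕ → D}
    (hs : HasSum (fun n => q ^ n * b n) s) (hb : ∀ n, Commute q (b n)) : Commute q s :=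
  hs.tsum_eq ▸ Commute.tsum_right q fun n => ((Commute.refl q).pow_right n).mul_right (hb n)

theorem mul_eq_of_hasSum_conj {q c s h : D} {v : ℕ → D} (hc : c ≠ 0)
    (hs : HasSum (fun m => q ^ m * c * v m) s)
    (hh : HasSum (fun m => (c⁻¹ * q * c) ^ m * v m) h) : c * h = s := by
  refine ((hh.mul_left c).congr_fun fun m => ?_).unique hs
  rw [GroupWithZero.conj_pow₀ hc]
  simp only [mul_assoc, mul_inv_cancel_left₀ hc]

theorem conjTransform_mem_and_inverse [NormedAlgebra ℝ D] [FiniteDimensional ℝ D] {r : ℝ}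
    {u v : ℕ → D} {g h s : D → D}
    (hg : ∀ q ∈ Metric.ball (0 : D) r, HasSum (fun n => q ^ n * u n) (g q))
    (hh : ∀ q ∈ Metric.ball (0 : D) r, HasSum (fun n => q ^ n * v n) (h q))
    (hs : ∀ q ∈ Metric.ball (0 : D) r, HasSum (fun n => q ^ n * regularMul u v n) (s q))
    (hb : ∀ n x, Commute x (regularMul u v n)) (q : D) (hq : q ∈ Metric.ball 0 r)
    (hsq : s q ≠ 0) :
    conjTransform g q ∈ Metric.ball 0 r ∧ s (conjTransform g q) ≠ 0 ∧
      conjTransform h (conjTransform g q) = q := by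
  have := FiniteDimensional.complete ℝ D
  have hcore : HasSum (fun m => q ^ m * g q * v m) (s q) :=
    (hg q hq).pow_mul_mul_of_regularMul (summable_norm_iff.mpr (hg q hq).summable)
      (summable_norm_iff.mpr (hh q hq).summable) (hs q hq)
  have hc : g q ≠ 0 := by
    intro hc
    rw [hc] at hcore
    simp only [mul_zero, zero_mul] at hcore
    exact hsq (hcore.unique hasSum_zero)
  have hT : conjTransform g q ∈ Metric.ball 0 r := by
    rwa [conjTransform, mem_ball_zero_iff, norm_conj₀ hc, ← mem_ball_zero_iff]
  have hsT : s (conjTransform g q) = (g q)⁻¹ * s q * g q :=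
    (hs _ hT).unique ((hs q hq).conj₀ hc fun n => hb n (g q))
  have hhT : h (conjTransform g q) = (g q)⁻¹ * s q :=
    (eq_inv_mul_iff_mul_eq₀ hc).mpr (mul_eq_of_hasSum_conj hc hcore (hh _ hT))
  have hqs : Commute q (s q) := (hs q hq).commute_of_commute fun n => hb n q
  refine ⟨hT, ?_, ?_⟩
  · rw [hsT]
    exact mul_ne_zero (mul_ne_zero (inv_ne_zero hc) hsq) hc
  · rw [conjTransform, hhT, mul_inv_rev, inv_inv, conjTransform]
    simp only [mul_assoc, mul_inv_cancel_left₀ hc, hqs.eq, inv_mul_cancel_left₀ hsq]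

end NormedDivisionRing

/-- The transformations `T_f(q) = f^c(q)⁻¹ q f^c(q)` and `T_{f^c}(q) = f(q)⁻¹ q f(q)`
are mutually inverse bijections of `B(0,R) ∖ Z_{f^s}` onto itself. -/
theorem transform_mutual_inverses
    (R : ℝ) (a : ℕ → ℍ[ℝ]) (f fc fs : ℍ[ℝ] → ℍ[ℝ])
    (hf : ∀ q ∈ Metric.ball (0 : ℍ[ℝ]) R, HasSum (fun n => q ^ n * a n) (f q))
    (hfc : ∀ q ∈ Metric.ball (0 : ℍ[ℝ]) R,
      HasSum (fun n => q ^ n * star (a n)) (fc q))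
    (hfs : ∀ q ∈ Metric.ball (0 : ℍ[ℝ]) R,
      HasSum (fun n => q ^ n * ∑ k ∈ range (n + 1), star (a k) * a (n - k)) (fs q)) :
    (∀ q ∈ Metric.ball (0 : ℍ[ℝ]) R, fs q ≠ 0 →
      ((fc q)⁻¹ * q * fc q ∈ Metric.ball (0 : ℍ[ℝ]) R ∧
        fs ((fc q)⁻¹ * q * fc q) ≠ 0 ∧
        (f ((fc q)⁻¹ * q * fc q))⁻¹ * ((fc q)⁻¹ * q * fc q) *
          f ((fc q)⁻¹ * q * fc q) = q)) ∧
    (∀ q ∈ Metric.ball (0 : ℍ[ℝ]) R, fs q ≠ 0 →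
      ((f q)⁻¹ * q * f q ∈ Metric.ball (0 : ℍ[ℝ]) R ∧
        fs ((f q)⁻¹ * q * f q) ≠ 0 ∧
        (fc ((f q)⁻¹ * q * f q))⁻¹ * ((f q)⁻¹ * q * f q) *
          fc ((f q)⁻¹ * q * f q) = q)) ∧
    Set.BijOn (fun q => (fc q)⁻¹ * q * fc q)
      {q ∈ Metric.ball (0 : ℍ[ℝ]) R | fs q ≠ 0}
      {q ∈ Metric.ball (0 : ℍ[ℝ]) R | fs q ≠ 0} := by
  have hcomm : regularMul (star a) a = regularMul a (star a) :=
    (funext (regularMul_self_star_comm a)).symm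
  have hcentral : ∀ n x, Commute x (regularMul a (star a) n) := fun n =>
    commute_of_star_eq_self (star_regularMul_self_star a n)
  have hfs' : ∀ q ∈ Metric.ball (0 : ℍ[ℝ]) R,
      HasSum (fun n => q ^ n * regularMul (star a) a n) (fs q) := hfs
  have left := conjTransform_mem_and_inverse hfc hf hfs' (hcomm ▸ hcentral)
  have right := conjTransform_mem_and_inverse hf hfc (hcomm ▸ hfs') hcentral
  refine ⟨left, right, Set.InvOn.bijOn (f' := conjTransform f) ⟨?_, ?_⟩ ?_ ?_⟩ <;>
    rintro q ⟨hq, hsq⟩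
  · exact (left q hq hsq).2.2
  · exact (right q hq hsq).2.2
  · exact ⟨(left q hq hsq).1, (left q hq hsq).2.1⟩
  · exact ⟨(right q hq hsq).1, (right q hq hsq).2.1⟩
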